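/- For every optimal policy π* and every state s ∈ S: (i) μ^{π*}_s(Safe ∩ {ω : ∃ t, ω t ∈ W}) = μ^{π*}_s({ω : ∃ t, ω t ∈ W}), and (ii) μ^{π*}_s(Safe ∩ {ω : ∀ t, ω t ∉ W}) = 0, where W is the winning region. -/

import Mathlib

open MeasureTheory Set
open scoped ENNReal Classical

variable {S : Type*}

def IsPathMeasure [MeasurableSpace S] (P : S → PMF S) (μ : S → Measure (ℕ → S)) : Prop :=
  (∀ s, IsProbabilityMeasure (μ s)) ∧
    ∀ (s : S) (n : ℕ) (x : ℕ → S),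
      μ s {ω | ∀ i ≤ n, ω i = x i} =
        (if x 0 = s then 1 else 0) * ∏ i ∈ Finset.range n, (P (x i)) (x (i + 1))

noncomputable def Rw (Acc : Set S) (γacc rn : ℝ) (s : S) : ℝ :=
  if s ∈ Acc then (1 - γacc) * rn else 0

noncomputable def Γw (Acc : Set S) (γacc γ : ℝ) (s : S) : ℝ :=
  if s ∈ Acc then γacc else γ

noncomputable def Ret (Acc : Set S) (γacc γ rn : ℝ) (ω : ℕ → S) : ℝ :=
  ∑' t : ℕ, Rw Acc γacc rn (ω (t + 1)) * ∏ k ∈ Finset.range t, Γw Acc γacc γ (ω (k + 1))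

noncomputable def Val [MeasurableSpace S] (Acc : Set S) (γacc γ rn : ℝ)
    (μ : S → Measure (ℕ → S)) (s : S) : ℝ :=
  ∫ ω, Ret Acc γacc γ rn ω ∂ (μ s)

variable {A : S → Type*}

noncomputable def Valp [MeasurableSpace S] (Acc : Set S) (γacc γ rn : ℝ)
    (μ : ((s : S) → A s) → S → Measure (ℕ → S)) (π : (s : S) → A s) (s : S) : ℝ :=
  ∫ ω, Ret Acc γacc γ rn ω ∂ (μ π s)

noncomputable def Qp [MeasurableSpace S] [Fintype S]
    (P : (s : S) → A s → PMF S) (Acc : Set S) (γacc γ rn : ℝ)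
    (μ : ((s : S) → A s) → S → Measure (ℕ → S)) (π : (s : S) → A s) (s : S) (a : A s) : ℝ :=
  ∑ s' : S, (P s a s').toReal *
    (Rw Acc γacc rn s' + Γw Acc γacc γ s' * Valp Acc γacc γ rn μ π s')

noncomputable def Qstar [MeasurableSpace S] [Fintype S]
    (P : (s : S) → A s → PMF S) (Acc : Set S) (γacc γ rn : ℝ)
    (μ : ((s : S) → A s) → S → Measure (ℕ → S)) (s : S) (a : A s) : ℝ :=
  ⨆ π : (s' : S) → A s', Qp P Acc γacc γ rn μ π s a

def WinRegion [MeasurableSpace S] (Acc : Set S)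
    (μ : ((s : S) → A s) → S → Measure (ℕ → S)) : Set S :=
  {s | ∃ π : (s' : S) → A s', μ π s {ω | ∀ t, ω t ∉ Acc} = 1}

def IsOptimal [MeasurableSpace S] (Acc : Set S) (γacc γ rn : ℝ)
    (μ : ((s : S) → A s) → S → Measure (ℕ → S)) (πo : (s : S) → A s) : Prop :=
  ∀ s, Valp Acc γacc γ rn μ πo s = ⨆ π : (s' : S) → A s', Valp Acc γacc γ rn μ π s


/-!
Returns are nonpositive and vanish exactly on the paths that never enter `Acc` after time 0, so a
policy has value 0 at a state outside `Acc` iff it is safe from there almost surely. At a winning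
state some policy has value 0, hence so does every optimal policy, which is therefore safe almost
surely. By the Markov property a path of the optimal chain that reaches the winning region at time
`t` is then almost surely safe after `t`, and, `Acc` being absorbing, also before `t`.

For the second claim, under any policy the probability of staying forever outside `Acc ∪ W` is
`< 1` from every state (it is `0` from `W`, and `< 1` elsewhere since no policy wins there). As
`S` is finite, some horizon `N` bounds the probability of staying `N` steps by `c < 1` uniformly,
and the Markov property gives the bound `c ^ k` for `k * N` steps.
-/

open Preorder Filter Topology

theorem MeasureTheory.Measure.ext_of_map_frestrictLe {X : ℕ → Type*}
    [∀ n, MeasurableSpace (X n)] {μ ν : Measure (Π n, X n)} [IsFiniteMeasure μ]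
    (h : ∀ n, μ.map (frestrictLe n) = ν.map (frestrictLe n)) : μ = ν := by
  have hP : IsProjectiveMeasureFamily fun I : Finset ℕ => μ.map I.restrict :=
    ProbabilityTheory.isProjectiveMeasureFamily_map_restrict (X := fun t (ω : Π n, X n) => ω t)
      fun t => (measurable_pi_apply t).aemeasurable
  exact IsProjectiveLimit.unique (P := fun I : Finset ℕ => μ.map I.restrict) (fun _ => rfl)
    ((isProjectiveLimit_nat_iff hP ν).2 fun n => (h n).symm)

def cyl (x : ℕ → S) (n : ℕ) : Set (ℕ → S) := {ω | ∀ i ≤ n, ω i = x i}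

def shift (n : ℕ) (ω : ℕ → S) : ℕ → S := fun t => ω (n + t)

@[simp]
theorem shift_apply (n : ℕ) (ω : ℕ → S) (t : ℕ) : shift n ω t = ω (n + t) := rfl

theorem measurable_shift [MeasurableSpace S] (n : ℕ) : Measurable (shift (S := S) n) :=
  measurable_pi_lambda _ fun t => measurable_pi_apply (n + t)

theorem frestrictLe_preimage_singleton (x : ℕ → S) (n : ℕ) :
    (frestrictLe n ⁻¹' {frestrictLe n x} : Set (ℕ → S)) = cyl x n := by
  ext ω
  simp [cyl, funext_iff]

theorem cyl_inter_shift_preimage_cyl {x y : ℕ → S} {n : ℕ} (hxy : y 0 = x n) (m : ℕ) :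
    cyl x n ∩ shift n ⁻¹' cyl y m =
      cyl (fun i => if i ≤ n then x i else y (i - n)) (n + m) := by
  ext ω
  simp only [cyl, mem_inter_iff, mem_preimage]
  constructor
  · rintro ⟨hx, hy⟩ i hi
    split_ifs with hin
    · exact hx i hin
    · simpa [show n + (i - n) = i by omega] using hy (i - n) (by omega)
  · intro hz
    refine ⟨fun i hi => by simpa [hi] using hz i (by omega), fun j hj => ?_⟩
    rcases Nat.eq_zero_or_pos j with rfl | hj0
    · simpa [hxy] using hz n (by omega)
    · simpa [show ¬ n + j ≤ n by omega] using hz (n + j) (by omega)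

theorem measurableSet_cyl [MeasurableSpace S] [MeasurableSingletonClass S] (x : ℕ → S)
    (n : ℕ) : MeasurableSet (cyl x n) := by
  rw [← frestrictLe_preimage_singleton]
  exact measurable_frestrictLe n (measurableSet_singleton _)

theorem frestrictLe_surjective (n : ℕ) : Function.Surjective (frestrictLe (π := fun _ => S) n) :=
  fun u => ⟨fun i => if hi : i ≤ n then u ⟨i, Finset.mem_Iic.2 hi⟩
      else u ⟨n, Finset.mem_Iic.2 le_rfl⟩, funext fun i => by simp [Finset.mem_Iic.1 i.2]⟩

def stayUpTo (G : Set S) (n : ℕ) : Set (ℕ → S) := {ω | ∀ t ≤ n, ω t ∈ G}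

theorem stayUpTo_eq_preimage (G : Set S) (n : ℕ) :
    stayUpTo G n = frestrictLe n ⁻¹' {v : Finset.Iic n → S | ∀ i, v i ∈ G} := by
  ext ω
  simp [stayUpTo]

theorem measurableSet_stayUpTo [MeasurableSpace S] [MeasurableSingletonClass S] [Countable S]
    (G : Set S) (n : ℕ) : MeasurableSet (stayUpTo G n) := by
  rw [stayUpTo_eq_preimage]
  exact measurable_frestrictLe n (to_countable _).measurableSet

theorem antitone_stayUpTo (G : Set S) : Antitone (stayUpTo G) :=
  fun _ _ hmn _ hω t ht => hω t (ht.trans hmn)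

theorem iInter_stayUpTo (G : Set S) : ⋂ n, stayUpTo G n = {ω | ∀ t, ω t ∈ G} := by
  ext ω
  simp only [stayUpTo, mem_iInter]
  exact ⟨fun hω t => hω t t le_rfl, fun hω n t _ => hω t⟩

theorem stayUpTo_add_subset (G : Set S) (m n : ℕ) :
    stayUpTo G (m + n) ⊆ stayUpTo G m ∩ shift m ⁻¹' stayUpTo G n :=
  fun _ hω => ⟨fun t ht => hω t (by omega), fun t ht => hω (m + t) (by omega)⟩

section PathMeasure

variable [MeasurableSpace S] {K : S → PMF S} {ν : S → Measure (ℕ → S)}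

theorem IsPathMeasure.measure_cyl (h : IsPathMeasure K ν) (s : S) (x : ℕ → S) (n : ℕ) :
    ν s (cyl x n) = (if x 0 = s then 1 else 0) * ∏ i ∈ Finset.range n, K (x i) (x (i + 1)) :=
  h.2 s n x

theorem IsPathMeasure.measure_cyl_inter_shift_preimage_cyl (h : IsPathMeasure K ν) (s : S)
    (x : ℕ → S) (n : ℕ) (y : ℕ → S) (m : ℕ) :
    ν s (cyl x n ∩ shift n ⁻¹' cyl y m) = ν s (cyl x n) * ν (x n) (cyl y m) := by
  by_cases hxy : y 0 = x n
  · rw [cyl_inter_shift_preimage_cyl hxy]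
    set z : ℕ → S := fun i => if i ≤ n then x i else y (i - n)
    have hz_le : ∀ i ≤ n, z i = x i := fun i hi => if_pos hi
    have hz_add : ∀ j, z (n + j) = y j := fun j => by
      rcases Nat.eq_zero_or_pos j with rfl | hj
      · simp [z, hxy]
      · simp [z, show ¬ n + j ≤ n by omega]
    have hpre : ∏ i ∈ Finset.range n, K (z i) (z (i + 1)) =
        ∏ i ∈ Finset.range n, K (x i) (x (i + 1)) :=
      Finset.prod_congr rfl fun i hi => by
        rw [hz_le i (Finset.mem_range.1 hi).le, hz_le (i + 1) (Finset.mem_range.1 hi)]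
    have hsuf : ∏ j ∈ Finset.range m, K (z (n + j)) (z (n + j + 1)) =
        ∏ j ∈ Finset.range m, K (y j) (y (j + 1)) :=
      Finset.prod_congr rfl fun j _ => by rw [hz_add, add_assoc, hz_add]
    rw [h.measure_cyl, h.measure_cyl, h.measure_cyl, Finset.prod_range_add, hpre, hsuf,
      if_pos hxy, hz_le 0 (Nat.zero_le n), one_mul, mul_assoc]
  · have hempty : cyl x n ∩ shift n ⁻¹' cyl y m = ∅ :=
      eq_empty_of_forall_notMem fun ω ⟨hx, hy⟩ =>
        hxy <| by simpa [hx n le_rfl] using (hy 0 (Nat.zero_le m)).symm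
    rw [hempty, h.measure_cyl (x n) y m, if_neg hxy]
    simp

variable [Countable S]

theorem IsPathMeasure.ae_eval_zero (h : IsPathMeasure K ν) (s : S) :
    ∀ᵐ ω ∂ν s, ω 0 = s := by
  rw [ae_iff]
  change ν s ((fun ω : ℕ → S => ω 0) ⁻¹' {s}ᶜ) = 0
  refine (measure_preimage_eq_zero_iff_of_countable (to_countable _)).2 fun y hy => ?_
  have hfiber : (fun ω : ℕ → S => ω 0) ⁻¹' {y} = cyl (fun _ => y) 0 := by
    ext ω
    simp [cyl]
  rw [hfiber, h.measure_cyl, if_neg (mem_compl_singleton_iff.1 hy), zero_mul]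

theorem IsPathMeasure.ae_mem_succ_of_mem (h : IsPathMeasure K ν) {Acc : Set S}
    (hK : ∀ s ∈ Acc, (K s).support ⊆ Acc) (s : S) :
    ∀ᵐ ω ∂ν s, ∀ t, ω t ∈ Acc → ω (t + 1) ∈ Acc := by
  refine ae_all_iff.2 fun t => ?_
  let T : Set (Finset.Iic (t + 1) → S) :=
    {v | v ⟨t, by simp⟩ ∈ Acc ∧ v ⟨t + 1, by simp⟩ ∉ Acc}
  have hT : {ω : ℕ → S | ¬(ω t ∈ Acc → ω (t + 1) ∈ Acc)} =
      frestrictLe (t + 1) ⁻¹' T := by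
    ext ω
    simp [T]
  rw [ae_iff, hT]
  refine (measure_preimage_eq_zero_iff_of_countable (to_countable T)).2 fun u hu => ?_
  obtain ⟨x, rfl⟩ := frestrictLe_surjective (t + 1) u
  rw [frestrictLe_preimage_singleton, h.measure_cyl]
  refine mul_eq_zero_of_right _ (Finset.prod_eq_zero (Finset.self_mem_range_succ t) ?_)
  exact (PMF.apply_eq_zero_iff _ _).2 fun hx => hu.2 (hK _ hu.1 hx)

variable [MeasurableSingletonClass S]

theorem IsPathMeasure.measure_cyl_inter_shift (h : IsPathMeasure K ν) (s : S) (x : ℕ → S)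
    (n : ℕ) {E : Set (ℕ → S)} (hE : MeasurableSet E) :
    ν s (cyl x n ∩ shift n ⁻¹' E) = ν s (cyl x n) * ν (x n) E := by
  have := h.1 s
  suffices ((ν s).restrict (cyl x n)).map (shift n) = ν s (cyl x n) • ν (x n) by
    simpa [Measure.map_apply (measurable_shift n) hE,
      Measure.restrict_apply (measurable_shift n hE), inter_comm] using congrArg (· E) this
  refine Measure.ext_of_map_frestrictLe fun m => Measure.ext_iff_singleton.2 fun u => ?_
  obtain ⟨y, rfl⟩ := frestrictLe_surjective m u
  rw [Measure.map_apply (measurable_frestrictLe m) (measurableSet_singleton _),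
    Measure.map_apply (measurable_frestrictLe m) (measurableSet_singleton _),
    frestrictLe_preimage_singleton, Measure.map_apply (measurable_shift n) (measurableSet_cyl y m),
    Measure.restrict_apply (measurable_shift n (measurableSet_cyl y m)), inter_comm,
    Measure.smul_apply, smul_eq_mul, h.measure_cyl_inter_shift_preimage_cyl]

theorem IsPathMeasure.measure_inter_shift_le (h : IsPathMeasure K ν) (s : S) {n : ℕ}
    {T : Set (Finset.Iic n → S)} {E : Set (ℕ → S)} (hE : MeasurableSet E) {c : ℝ≥0∞}
    (hc : ∀ ω : ℕ → S, frestrictLe n ω ∈ T → ν (ω n) E ≤ c) :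
    ν s (frestrictLe n ⁻¹' T ∩ shift n ⁻¹' E) ≤ ν s (frestrictLe n ⁻¹' T) * c := by
  have hfiber : ∀ u ∈ T, MeasurableSet (frestrictLe (π := fun _ => S) n ⁻¹' {u}) :=
    fun u _ => measurable_frestrictLe n (measurableSet_singleton u)
  have hbound : ∀ u ∈ T, (ν s).restrict (shift n ⁻¹' E) (frestrictLe n ⁻¹' {u}) ≤
      ν s (frestrictLe n ⁻¹' {u}) * c := by
    intro u hu
    obtain ⟨x, rfl⟩ := frestrictLe_surjective n u
    rw [Measure.restrict_apply (hfiber _ hu), frestrictLe_preimage_singleton,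
      h.measure_cyl_inter_shift s x n hE]
    exact mul_le_mul_right (hc x hu) _
  calc ν s (frestrictLe n ⁻¹' T ∩ shift n ⁻¹' E)
      = ∑' u : T, (ν s).restrict (shift n ⁻¹' E) (frestrictLe n ⁻¹' {↑u}) := by
        rw [tsum_measure_preimage_singleton T.to_countable hfiber,
          Measure.restrict_apply (measurable_frestrictLe n T.to_countable.measurableSet)]
    _ ≤ ∑' u : T, ν s (frestrictLe n ⁻¹' {↑u}) * c :=
        ENNReal.tsum_le_tsum fun u => hbound u u.2
    _ = ν s (frestrictLe n ⁻¹' T) * c := by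
        rw [ENNReal.tsum_mul_right, tsum_measure_preimage_singleton T.to_countable hfiber]

theorem IsPathMeasure.measure_stayUpTo_mul_le (h : IsPathMeasure K ν) {G : Set S} {N : ℕ}
    {c : ℝ≥0∞} (hc : ∀ w, ν w (stayUpTo G N) ≤ c) (s : S) (k : ℕ) :
    ν s (stayUpTo G (k * N)) ≤ c ^ k := by
  induction k with
  | zero =>
    have := h.1 s
    simpa using prob_le_one
  | succ k ih =>
    calc ν s (stayUpTo G ((k + 1) * N))
        ≤ ν s (stayUpTo G (k * N) ∩ shift (k * N) ⁻¹' stayUpTo G N) := by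
          rw [Nat.succ_mul]
          exact measure_mono (stayUpTo_add_subset G _ N)
      _ ≤ ν s (stayUpTo G (k * N)) * c := by
          rw [stayUpTo_eq_preimage]
          exact h.measure_inter_shift_le s (measurableSet_stayUpTo G N) fun ω _ => hc _
      _ ≤ c ^ (k + 1) := by
          rw [pow_succ]
          exact mul_le_mul_left ih _

theorem IsPathMeasure.exists_measure_stayUpTo_le [Finite S] [Nonempty S] (h : IsPathMeasure K ν)
    {G : Set S} (hG : ∀ s, ν s {ω | ∀ t, ω t ∈ G} < 1) :
    ∃ N, ∃ c < 1, ∀ w, ν w (stayUpTo G N) ≤ c := by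
  have hlim : ∀ w,
      Tendsto (ν w ∘ stayUpTo G) atTop (𝓝 (ν w {ω | ∀ t, ω t ∈ G})) := by
    intro w
    have := h.1 w
    rw [← iInter_stayUpTo]
    exact tendsto_measure_iInter_atTop (fun n => (measurableSet_stayUpTo G n).nullMeasurableSet)
      (antitone_stayUpTo G) ⟨0, measure_ne_top _ _⟩
  obtain ⟨N, hN⟩ : ∃ N, ∀ w, ν w (stayUpTo G N) < 1 :=
    (eventually_all.2 fun w => (hlim w).eventually_lt_const (hG w)).exists
  obtain ⟨w₀, hw₀⟩ := Finite.exists_max fun w => ν w (stayUpTo G N)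
  exact ⟨N, _, hN w₀, hw₀⟩

theorem IsPathMeasure.measure_forall_mem_eq_zero [Finite S] (h : IsPathMeasure K ν) {G : Set S}
    (hG : ∀ s, ν s {ω | ∀ t, ω t ∈ G} < 1) (s : S) :
    ν s {ω | ∀ t, ω t ∈ G} = 0 := by
  have : Nonempty S := ⟨s⟩
  obtain ⟨N, c, hc1, hc⟩ := h.exists_measure_stayUpTo_le hG
  refine le_antisymm (ge_of_tendsto' (ENNReal.tendsto_pow_atTop_nhds_zero_of_lt_one hc1)
    fun k => ?_) bot_le
  rw [← iInter_stayUpTo]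
  exact (measure_mono (iInter_subset _ _)).trans (h.measure_stayUpTo_mul_le hc s k)

end PathMeasure

section Return

variable (Acc : Set S) {γacc γ rn : ℝ}

noncomputable def retTerm (γacc γ rn : ℝ) (ω : ℕ → S) (t : ℕ) : ℝ :=
  Rw Acc γacc rn (ω (t + 1)) * ∏ k ∈ Finset.range t, Γw Acc γacc γ (ω (k + 1))

theorem Rw_of_notMem {s : S} (hs : s ∉ Acc) : Rw Acc γacc rn s = 0 := if_neg hs

theorem Rw_neg_of_mem (hrn : rn < 0) (hγacc : γacc < 1) {s : S} (hs : s ∈ Acc) :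
    Rw Acc γacc rn s < 0 := by
  rw [Rw, if_pos hs]
  exact mul_neg_of_pos_of_neg (by linarith) hrn

theorem Rw_nonpos (hrn : rn < 0) (hγacc : γacc < 1) (s : S) : Rw Acc γacc rn s ≤ 0 := by
  by_cases hs : s ∈ Acc
  · exact (Rw_neg_of_mem Acc hrn hγacc hs).le
  · exact (Rw_of_notMem Acc hs).le

theorem norm_Rw_le (s : S) : ‖Rw Acc γacc rn s‖ ≤ ‖(1 - γacc) * rn‖ := by
  unfold Rw
  split_ifs
  exacts [le_rfl, by rw [norm_zero]; exact norm_nonneg _]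

theorem Γw_pos (hγ : 0 < γ) (hγacc : 0 < γacc) (s : S) : 0 < Γw Acc γacc γ s := by
  unfold Γw
  split_ifs
  exacts [hγacc, hγ]

theorem Γw_le_max (s : S) : Γw Acc γacc γ s ≤ max γ γacc := by
  unfold Γw
  split_ifs
  exacts [le_max_right _ _, le_max_left _ _]

variable (hγ : 0 < γ ∧ γ < 1) (hγacc : 0 < γacc ∧ γacc < 1)
include hγ hγacc

theorem norm_retTerm_le (ω : ℕ → S) (t : ℕ) :
    ‖retTerm Acc γacc γ rn ω t‖ ≤ ‖(1 - γacc) * rn‖ * max γ γacc ^ t := by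
  rw [retTerm, norm_mul, Real.norm_of_nonneg
    (Finset.prod_nonneg fun _ _ => (Γw_pos Acc hγ.1 hγacc.1 _).le)]
  refine mul_le_mul (norm_Rw_le Acc _) ?_ (Finset.prod_nonneg fun _ _ =>
    (Γw_pos Acc hγ.1 hγacc.1 _).le) (norm_nonneg _)
  simpa using Finset.prod_le_prod (s := Finset.range t)
    (fun k _ => (Γw_pos Acc hγ.1 hγacc.1 (ω (k + 1))).le) fun k _ => Γw_le_max Acc (ω (k + 1))

theorem hasSum_bound_retTerm :
    HasSum (fun t => ‖(1 - γacc) * rn‖ * max γ γacc ^ t)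
      (‖(1 - γacc) * rn‖ * (1 - max γ γacc)⁻¹) :=
  (hasSum_geometric_of_lt_one (hγ.1.le.trans (le_max_left _ _)) (max_lt hγ.2 hγacc.2)).mul_left _

theorem summable_retTerm (ω : ℕ → S) : Summable (retTerm Acc γacc γ rn ω) :=
  .of_norm_bounded (hasSum_bound_retTerm hγ hγacc).summable (norm_retTerm_le Acc hγ hγacc ω)

theorem measurable_Ret [MeasurableSpace S] [MeasurableSingletonClass S] [Countable S] :
    Measurable (Ret Acc γacc γ rn) := by
  refine measurable_of_tendsto_metrizable (f := fun n ω => ∑ t ∈ Finset.range n,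
    retTerm Acc γacc γ rn ω t) (fun n => ?_)
    (tendsto_pi_nhds.2 fun ω => (summable_retTerm Acc hγ hγacc ω).hasSum.tendsto_sum_nat)
  refine Finset.measurable_sum _ fun t _ => .mul ?_ (Finset.measurable_prod _ fun k _ => ?_)
  · exact (measurable_of_countable (Rw Acc γacc rn)).comp (measurable_pi_apply (t + 1))
  · exact (measurable_of_countable (Γw Acc γacc γ)).comp (measurable_pi_apply (k + 1))

theorem integrable_Ret [MeasurableSpace S] [MeasurableSingletonClass S] [Countable S]
    {ν : Measure (ℕ → S)} [IsFiniteMeasure ν] : Integrable (Ret Acc γacc γ rn) ν :=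
  .of_bound (measurable_Ret Acc hγ hγacc).aestronglyMeasurable _ <| .of_forall fun ω =>
    tsum_of_norm_bounded (hasSum_bound_retTerm hγ hγacc) (norm_retTerm_le Acc hγ hγacc ω)

variable (hrn : rn < 0)
include hrn

theorem retTerm_nonpos (ω : ℕ → S) (t : ℕ) : retTerm Acc γacc γ rn ω t ≤ 0 :=
  mul_nonpos_of_nonpos_of_nonneg (Rw_nonpos Acc hrn hγacc.2 _)
    (Finset.prod_nonneg fun _ _ => (Γw_pos Acc hγ.1 hγacc.1 _).le)

theorem Ret_nonpos (ω : ℕ → S) : Ret Acc γacc γ rn ω ≤ 0 :=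
  tsum_nonpos (retTerm_nonpos Acc hγ hγacc hrn ω)

theorem retTerm_eq_zero_iff (ω : ℕ → S) (t : ℕ) :
    retTerm Acc γacc γ rn ω t = 0 ↔ ω (t + 1) ∉ Acc := by
  rw [retTerm, mul_eq_zero, or_iff_left (Finset.prod_pos fun _ _ =>
    Γw_pos Acc hγ.1 hγacc.1 _).ne']
  exact ⟨fun h hmem => (Rw_neg_of_mem Acc hrn hγacc.2 hmem).ne h, Rw_of_notMem Acc⟩

theorem Ret_eq_zero_iff (ω : ℕ → S) :
    Ret Acc γacc γ rn ω = 0 ↔ ∀ t, ω (t + 1) ∉ Acc := by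
  have hsum : HasSum (fun t => -retTerm Acc γacc γ rn ω t) (-Ret Acc γacc γ rn ω) :=
    (summable_retTerm Acc hγ hγacc ω).hasSum.neg
  calc Ret Acc γacc γ rn ω = 0 ↔ HasSum (fun t => -retTerm Acc γacc γ rn ω t) 0 :=
        ⟨fun h => by rwa [h, neg_zero] at hsum, fun h => neg_eq_zero.1 (hsum.unique h)⟩
    _ ↔ ∀ t, retTerm Acc γacc γ rn ω t = 0 := by
        rw [hasSum_zero_iff_of_nonneg fun t =>
          neg_nonneg.2 (retTerm_nonpos Acc hγ hγacc hrn ω t)]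
        simp [funext_iff]
    _ ↔ ∀ t, ω (t + 1) ∉ Acc := forall_congr' (retTerm_eq_zero_iff Acc hγ hγacc hrn ω)

theorem integral_Ret_eq_zero_iff [MeasurableSpace S] [MeasurableSingletonClass S] [Countable S]
    {ν : Measure (ℕ → S)} [IsFiniteMeasure ν] :
    ∫ ω, Ret Acc γacc γ rn ω ∂ν = 0 ↔ ∀ᵐ ω ∂ν, ∀ t, ω (t + 1) ∉ Acc := by
  rw [← neg_eq_zero, ← integral_neg, integral_eq_zero_iff_of_nonneg
    (fun ω => neg_nonneg.2 (Ret_nonpos Acc hγ hγacc hrn ω)) (integrable_Ret Acc hγ hγacc).neg]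
  exact eventually_congr (.of_forall fun ω => by simp [Ret_eq_zero_iff Acc hγ hγacc hrn ω])

end Return

theorem measurableSet_forall_notMem [MeasurableSpace S] [MeasurableSingletonClass S]
    [Countable S] (Acc : Set S) : MeasurableSet {ω : ℕ → S | ∀ t, ω t ∉ Acc} := by
  have hsafe :
      {ω : ℕ → S | ∀ t, ω t ∉ Acc} = ⋂ t, (fun ω : ℕ → S => ω t) ⁻¹' Accᶜ := by
    ext ω
    simp
  rw [hsafe]
  exact .iInter fun t => measurable_pi_apply t .of_discrete

section Policy

variable [MeasurableSpace S] [Countable S]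
  {P : (s : S) → A s → PMF S} {Acc : Set S}
  {μ : ((s : S) → A s) → S → Measure (ℕ → S)}
  (hμ : ∀ π : (s : S) → A s, IsPathMeasure (fun s => P s (π s)) (μ π))
include hμ

theorem notMem_of_mem_winRegion {w : S} (hw : w ∈ WinRegion Acc μ) : w ∉ Acc := by
  obtain ⟨π, hπ⟩ := hw
  intro hwAcc
  have hnull : μ π w {ω | ∀ t, ω t ∉ Acc} = 0 :=
    measure_mono_null (fun ω (hω : ∀ t, ω t ∉ Acc) (h0 : ω 0 = w) => hω 0 (h0 ▸ hwAcc))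
      (ae_iff.1 ((hμ π).ae_eval_zero w))
  exact one_ne_zero (hπ.symm.trans hnull)

variable [MeasurableSingletonClass S]

theorem measure_safe_inter_forall_notMem_winRegion [Finite S] (π : (s : S) → A s) (s : S) :
    μ π s ({ω | ∀ t, ω t ∉ Acc} ∩ {ω | ∀ t, ω t ∉ WinRegion Acc μ}) = 0 := by
  have hset : {ω : ℕ → S | ∀ t, ω t ∉ Acc} ∩ {ω | ∀ t, ω t ∉ WinRegion Acc μ} =
      {ω | ∀ t, ω t ∈ {x | x ∉ Acc ∧ x ∉ WinRegion Acc μ}} := by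
    ext ω
    simp [forall_and]
  rw [hset]
  refine (hμ π).measure_forall_mem_eq_zero (fun w => ?_) s
  have := (hμ π).1 w
  by_cases hw : w ∈ WinRegion Acc μ
  · calc μ π w {ω | ∀ t, ω t ∈ {x | x ∉ Acc ∧ x ∉ WinRegion Acc μ}}
        ≤ μ π w {ω | ¬ω 0 = w} := measure_mono fun ω hω h0 => (hω 0).2 (h0 ▸ hw)
      _ < 1 := by rw [ae_iff.1 ((hμ π).ae_eval_zero w)]; exact zero_lt_one
  · calc μ π w {ω | ∀ t, ω t ∈ {x | x ∉ Acc ∧ x ∉ WinRegion Acc μ}}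
        ≤ μ π w {ω | ∀ t, ω t ∉ Acc} := measure_mono fun ω hω t => (hω t).1
      _ < 1 := lt_of_le_of_ne prob_le_one fun h => hw ⟨π, h⟩

variable {γacc γ rn : ℝ} (hγ : 0 < γ ∧ γ < 1) (hγacc : 0 < γacc ∧ γacc < 1)
  (hrn : rn < 0)
include hγ hγacc hrn

theorem Valp_eq_zero_iff (π : (s : S) → A s) {s : S} (hs : s ∉ Acc) :
    Valp Acc γacc γ rn μ π s = 0 ↔ μ π s {ω | ∀ t, ω t ∉ Acc} = 1 := by
  have := (hμ π).1 s
  rw [Valp, integral_Ret_eq_zero_iff Acc hγ hγacc hrn, ← measure_univ (μ := μ π s),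
    ← ae_iff_measure_eq (measurableSet_forall_notMem Acc).nullMeasurableSet]
  refine ⟨fun h => ?_, fun h => h.mono fun ω hω t => hω (t + 1)⟩
  filter_upwards [h, (hμ π).ae_eval_zero s] with ω hω h0 t
  cases t with
  | zero => exact h0 ▸ hs
  | succ t => exact hω t

variable {πo : (s : S) → A s} (hopt : IsOptimal Acc γacc γ rn μ πo)
include hopt

theorem IsOptimal.measure_safe_eq_one {w : S} (hw : w ∈ WinRegion Acc μ) :
    μ πo w {ω | ∀ t, ω t ∉ Acc} = 1 := by
  have hwAcc := notMem_of_mem_winRegion hμ hw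
  obtain ⟨π, hπ⟩ := hw
  have hnonpos : ∀ π' : (s : S) → A s, Valp Acc γacc γ rn μ π' w ≤ 0 :=
    fun π' => integral_nonpos (Ret_nonpos Acc hγ hγacc hrn)
  refine (Valp_eq_zero_iff hμ hγ hγacc hrn πo hwAcc).1 (le_antisymm (hnonpos πo) ?_)
  rw [hopt w, ← (Valp_eq_zero_iff hμ hγ hγacc hrn π hwAcc).2 hπ]
  exact le_ciSup ⟨0, forall_mem_range.2 hnonpos⟩ π

theorem IsOptimal.ae_safe_after_mem_winRegion (s : S) (t : ℕ) :
    ∀ᵐ ω ∂μ πo s, ω t ∈ WinRegion Acc μ → ∀ u, ω (t + u) ∉ Acc := by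
  let T : Set (Finset.Iic t → S) := {v | v ⟨t, Finset.mem_Iic.2 le_rfl⟩ ∈ WinRegion Acc μ}
  have hT : {ω : ℕ → S | ¬(ω t ∈ WinRegion Acc μ → ∀ u, ω (t + u) ∉ Acc)} =
      frestrictLe t ⁻¹' T ∩ shift t ⁻¹' {ω | ∀ u, ω u ∉ Acc}ᶜ := by
    ext ω
    simp [T]
  rw [ae_iff, hT, ← nonpos_iff_eq_zero, ← mul_zero (μ πo s (frestrictLe t ⁻¹' T))]
  refine (hμ πo).measure_inter_shift_le s (measurableSet_forall_notMem Acc).compl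
    fun ω hω => ?_
  have := (hμ πo).1 (ω t)
  rw [nonpos_iff_eq_zero, prob_compl_eq_zero_iff (measurableSet_forall_notMem Acc)]
  exact hopt.measure_safe_eq_one hμ hγ hγacc hrn hω

theorem IsOptimal.ae_safe_of_exists_mem_winRegion
    (habs : ∀ s ∈ Acc, ∀ a : A s, (P s a).support ⊆ Acc) (s : S) :
    ∀ᵐ ω ∂μ πo s, (∃ t, ω t ∈ WinRegion Acc μ) → ∀ t, ω t ∉ Acc := by
  filter_upwards [ae_all_iff.2 (hopt.ae_safe_after_mem_winRegion hμ hγ hγacc hrn s),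
    (hμ πo).ae_mem_succ_of_mem (fun s hs => habs s hs (πo s)) s] with ω hafter hsucc
  rintro ⟨t, ht⟩ u hu
  rcases le_or_gt t u with htu | hut
  · exact (Nat.add_sub_cancel' htu ▸ hafter t ht (u - t)) hu
  · exact notMem_of_mem_winRegion hμ ht
      (Nat.le_induction hu (fun n _ hn => hsucc n hn) t hut.le)

end Policy

theorem optimal_policy_safe_and_reach_winning_region_general
    [Fintype S] [MeasurableSpace S] [MeasurableSingletonClass S]
    (P : (s : S) → A s → PMF S) (Acc : Set S)
    (habs : ∀ s ∈ Acc, ∀ a : A s, (P s a).support ⊆ Acc)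
    (μ : ((s : S) → A s) → S → Measure (ℕ → S))
    (hμ : ∀ π : (s : S) → A s, IsPathMeasure (fun s => P s (π s)) (μ π))
    (rn γ γacc : ℝ) (hrn : rn < 0) (hγ : 0 < γ ∧ γ < 1) (hγacc : 0 < γacc ∧ γacc < 1)
    (πo : (s : S) → A s) (hopt : IsOptimal Acc γacc γ rn μ πo) :
    ∀ s : S,
      μ πo s ({ω | ∀ t, ω t ∉ Acc} ∩ {ω | ∃ t, ω t ∈ WinRegion Acc μ}) =
          μ πo s {ω | ∃ t, ω t ∈ WinRegion Acc μ} ∧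
        μ πo s ({ω | ∀ t, ω t ∉ Acc} ∩ {ω | ∀ t, ω t ∉ WinRegion Acc μ}) = 0 := by
  intro s
  refine ⟨measure_congr (eventuallyEq_set.2 ?_),
    measure_safe_inter_forall_notMem_winRegion hμ πo s⟩
  filter_upwards [hopt.ae_safe_of_exists_mem_winRegion hμ hγ hγacc hrn habs s] with ω hω
  exact ⟨And.right, fun h => ⟨hω h, h⟩⟩

/-- under an optimal policy, (i) almost every path that eventually reaches
the winning region is safe, and (ii) the set of safe paths never visiting the winning
region is null. -/
theorem optimal_policy_safe_and_reach_winning_region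
    [Fintype S] [Nonempty S] [MeasurableSpace S] [MeasurableSingletonClass S]
    [∀ s, Fintype (A s)] [∀ s, Nonempty (A s)]
    (P : (s : S) → A s → PMF S) (Acc : Set S)
    (habs : ∀ s ∈ Acc, ∀ a : A s, (P s a).support ⊆ Acc)
    (μ : ((s : S) → A s) → S → Measure (ℕ → S))
    (hμ : ∀ π : (s : S) → A s, IsPathMeasure (fun s => P s (π s)) (μ π))
    (rn γ γacc : ℝ) (hrn : rn < 0) (hγ : 0 < γ ∧ γ < 1) (hγacc : 0 < γacc ∧ γacc < 1)
    (πo : (s : S) → A s) (hopt : IsOptimal Acc γacc γ rn μ πo) :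
    ∀ s : S,
      μ πo s ({ω | ∀ t, ω t ∉ Acc} ∩ {ω | ∃ t, ω t ∈ WinRegion Acc μ}) =
          μ πo s {ω | ∃ t, ω t ∈ WinRegion Acc μ} ∧
        μ πo s ({ω | ∀ t, ω t ∉ Acc} ∩ {ω | ∀ t, ω t ∉ WinRegion Acc μ}) = 0 :=
  optimal_policy_safe_and_reach_winning_region_general P Acc habs μ hμ rn γ γacc hrn hγ hγacc πo
    hopt
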